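/- (Theorem 1, sufficient-RIP part, in its equivalent D_Σ form.) Let n ≥ 2k ≥ 2. For every set of atoms A ⊆ Σ_k with sup_{a∈A} ‖a‖₂ = 1, one has D_Σ(‖·‖_A) ≥ D_Σ(‖·‖₁), where D_Σ(R) = sup_{z ∈ T_R(Σ_k), z≠0} ‖z_{Tᶜ}‖_Σ² / ‖z_T‖₂², T being a set of k indices carrying the k largest values of |z_i| (the value is independent of the choice of such a T), z_T and z_{Tᶜ} the restrictions of z to T and its complement (extended by zero), and ‖·‖_Σ the atomic norm generated by the k-sparse unit vectors Σ_k ∩ S(1). That is, the ℓ¹-norm minimizes D_Σ over atomic norms with unit-norm atoms contained in Σ_k. -/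

import Mathlib

noncomputable section

open scoped Pointwise ENNReal

/-- The set of `j`-sparse vectors in `ℝⁿ`. -/
def sparse (n j : ℕ) : Set (EuclideanSpace ℝ (Fin n)) :=
  {x | ∃ S : Finset (Fin n), S.card ≤ j ∧ ∀ i ∉ S, x i = 0}

/-- Descent vectors of `R` at `x`. -/
def descentSet {H : Type*} [AddCommGroup H] (R : H → ℝ) (x : H) : Set H :=
  {z | R (x + z) ≤ R x}

/-- Descent vectors of `R` at the model set `S`. -/
def descentCone {H : Type*} [AddCommGroup H] (R : H → ℝ) (S : Set H) : Set H :=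
  ⋃ x ∈ S, descentSet R x

/-- The atomic norm generated by the set of atoms `A`. -/
def atomicNorm {n : ℕ} (A : Set (EuclideanSpace ℝ (Fin n)))
    (x : EuclideanSpace ℝ (Fin n)) : ℝ :=
  sInf {t : ℝ | 0 ≤ t ∧ x ∈ t • closure (convexHull ℝ A)}

/-- The restriction of `z` to the complement of `S` (extended by zero). -/
def restrictCompl {n : ℕ} (z : EuclideanSpace ℝ (Fin n)) (S : Finset (Fin n)) :
    EuclideanSpace ℝ (Fin n) :=
  WithLp.toLp 2 (fun i => if i ∈ S then 0 else z i)

/-- The quantity `D_Σ(R) ∈ [0, ∞]`, where `‖·‖_Σ` is the atomic norm generated by the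
`k`-sparse unit vectors. -/
def DSigma (n k : ℕ) (R : EuclideanSpace ℝ (Fin n) → ℝ) : ℝ≥0∞ :=
  sSup {v : ℝ≥0∞ | ∃ z ∈ descentCone R (sparse n k), z ≠ 0 ∧
    ∃ T : Finset (Fin n), T.card = k ∧ (∀ i ∈ T, ∀ j ∉ T, |z j| ≤ |z i|) ∧
      v = ENNReal.ofReal
        ((atomicNorm (sparse n k ∩ Metric.sphere 0 1) (restrictCompl z T)) ^ 2 /
          ∑ i ∈ T, (z i) ^ 2)}


-- ### auxiliary lemmas

lemma atomicNorm_nonneg {n : ℕ} (A : Set (EuclideanSpace ℝ (Fin n)))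
    (x : EuclideanSpace ℝ (Fin n)) : 0 ≤ atomicNorm A x :=
  Real.sInf_nonneg fun _ ht => ht.1

lemma atomicNorm_le {n : ℕ} {A : Set (EuclideanSpace ℝ (Fin n))}
    {x : EuclideanSpace ℝ (Fin n)} {t : ℝ} (ht : 0 ≤ t)
    (hx : x ∈ t • closure (convexHull ℝ A)) : atomicNorm A x ≤ t :=
  csInf_le ⟨0, fun _ hs => hs.1⟩ ⟨ht, hx⟩

/-- the set of "sigma" atoms -/
def sigAtoms (n k : ℕ) : Set (EuclideanSpace ℝ (Fin n)) :=
  sparse n k ∩ Metric.sphere 0 1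

lemma norm_le_one_of_mem_closure_convexHull {n : ℕ}
    {c : EuclideanSpace ℝ (Fin n)} (hc : c ∈ closure (convexHull ℝ (sigAtoms n k))) :
    ‖c‖ ≤ 1 := by
  have h1 : sigAtoms n k ⊆ Metric.closedBall 0 1 := fun a ha =>
    Metric.sphere_subset_closedBall ha.2
  have h2 : convexHull ℝ (sigAtoms n k) ⊆ Metric.closedBall 0 1 :=
    convexHull_min h1 (convex_closedBall 0 1)
  have h3 : closure (convexHull ℝ (sigAtoms n k)) ⊆ Metric.closedBall 0 1 :=
    Metric.isClosed_closedBall.closure_subset_iff.mpr h2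
  simpa [Metric.mem_closedBall, dist_zero_right] using h3 hc

lemma norm_le_of_mem_smul {n k : ℕ} {x : EuclideanSpace ℝ (Fin n)} {t : ℝ}
    (hx : x ∈ t • closure (convexHull ℝ (sigAtoms n k))) (ht : 0 ≤ t) : ‖x‖ ≤ t := by
  obtain ⟨c, hc, rfl⟩ := hx
  have := norm_le_one_of_mem_closure_convexHull (k := k) hc
  calc ‖t • c‖ = |t| * ‖c‖ := by rw [norm_smul]; simp [Real.norm_eq_abs]
  _ ≤ |t| * 1 := by
      apply mul_le_mul_of_nonneg_left this (abs_nonneg t)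
  _ = t := by rw [mul_one, abs_of_nonneg ht]




variable {n k : ℕ}

lemma single_mem_sigAtoms (hn : 0 < n) (hk : 0 < k) :
    (EuclideanSpace.single (⟨0, hn⟩ : Fin n) (1:ℝ)) ∈ sigAtoms n k := by
  constructor
  · exact ⟨{⟨0, hn⟩}, by simpa using Nat.succ_le_of_lt hk, fun i hi => by
      simp [EuclideanSpace.single_apply]
      intro h; exact absurd (by simp [h]) hi⟩
  · simp [mem_sphere_zero_iff_norm, EuclideanSpace.norm_single]

lemma neg_single_mem_sigAtoms (hn : 0 < n) (hk : 0 < k) :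
    -(EuclideanSpace.single (⟨0, hn⟩ : Fin n) (1:ℝ)) ∈ sigAtoms n k := by
  constructor
  · exact ⟨{⟨0, hn⟩}, by simpa using Nat.succ_le_of_lt hk, fun i hi => by
      simp [EuclideanSpace.single_apply]
      intro h; exact absurd (by simp [h]) hi⟩
  · simp [mem_sphere_zero_iff_norm, EuclideanSpace.norm_single]

lemma zero_mem_convexHull_sigAtoms (hn : 0 < n) (hk : 0 < k) :
    (0 : EuclideanSpace ℝ (Fin n)) ∈ convexHull ℝ (sigAtoms n k) := by
  have he := subset_convexHull ℝ (sigAtoms n k) (single_mem_sigAtoms hn hk)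
  have hne := subset_convexHull ℝ (sigAtoms n k) (neg_single_mem_sigAtoms hn hk)
  have := (convex_convexHull ℝ (sigAtoms n k)) he hne (by norm_num : (0:ℝ) ≤ 1/2)
    (by norm_num : (0:ℝ) ≤ 1/2) (by norm_num)
  simpa using this

/-- every `k`-sparse vector of norm at most one lies in the hull of the atoms -/
lemma sparse_small_mem_convexHull (hn : 0 < n) (hk : 0 < k)
    {v : EuclideanSpace ℝ (Fin n)} (hv : v ∈ sparse n k) (hvn : ‖v‖ ≤ 1) :
    v ∈ convexHull ℝ (sigAtoms n k) := by
  rcases eq_or_ne v 0 with rfl | hv0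
  · exact zero_mem_convexHull_sigAtoms hn hk
  · have hvpos : 0 < ‖v‖ := norm_pos_iff.mpr hv0
    have hatom : ‖v‖⁻¹ • v ∈ sigAtoms n k := by
      constructor
      · obtain ⟨S, hS, hSo⟩ := hv
        exact ⟨S, hS, fun i hi => by
          have : v i = 0 := hSo i hi
          show ‖v‖⁻¹ * v i = 0
          simp [this]⟩
      · simp [mem_sphere_zero_iff_norm, norm_smul, abs_of_nonneg (le_of_lt (inv_pos.mpr hvpos)),
          inv_mul_cancel₀ (ne_of_gt hvpos)]
    have h0 := zero_mem_convexHull_sigAtoms hn hk (k := k)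
    have ha := subset_convexHull ℝ (sigAtoms n k) hatom
    have hcomb := (convex_convexHull ℝ (sigAtoms n k)) ha h0
      (le_of_lt hvpos) (by linarith : (0:ℝ) ≤ 1 - ‖v‖) (by ring)
    have : ‖v‖ • (‖v‖⁻¹ • v) + (1 - ‖v‖) • (0 : EuclideanSpace ℝ (Fin n)) = v := by
      rw [smul_smul, mul_inv_cancel₀ (ne_of_gt hvpos)]; simp
    rwa [this] at hcomb

lemma sum_erase_eq_sub' {n : ℕ} (i : Fin n) (y : Fin n → ℝ) :
    ∑ l ∈ Finset.univ.erase i, y l = (∑ l, y l) - y i := by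
  rw [eq_sub_iff_add_eq, add_comm]
  exact Finset.add_sum_erase _ y (Finset.mem_univ i)

lemma sum_if_one {n : ℕ} (i : Fin n) (c : ℝ) (y : Fin n → ℝ) :
    ∑ l, (if l = i then c else y l) = c + ((∑ l, y l) - y i) := by
  rw [← Finset.add_sum_erase _ (fun l => if l = i then c else y l) (Finset.mem_univ i)]
  rw [if_pos rfl]
  congr 1
  rw [Finset.sum_congr rfl (fun l hl => if_neg (Finset.ne_of_mem_erase hl))]
  exact sum_erase_eq_sub' i y

lemma sum_if_two {n : ℕ} {i j : Fin n} (hij : j ≠ i) (a b : ℝ) (y : Fin n → ℝ) :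
    ∑ l, (if l = i then a else if l = j then b else y l)
      = a + b + ((∑ l, y l) - y i - y j) := by
  have h1 : ∑ l, (if l = i then a else if l = j then b else y l)
      = a + ∑ l ∈ Finset.univ.erase i, (if l = j then b else y l) := by
    rw [← Finset.add_sum_erase _ (fun l => if l = i then a else if l = j then b else y l)
      (Finset.mem_univ i), if_pos rfl]
    congr 1
    exact Finset.sum_congr rfl (fun l hl => if_neg (Finset.ne_of_mem_erase hl))
  have h2 : ∑ l ∈ Finset.univ.erase i, (if l = j then b else y l)
      = b + ∑ l ∈ (Finset.univ.erase i).erase j, y l := by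
    rw [← Finset.add_sum_erase _ (fun l => if l = j then b else y l)
      (Finset.mem_erase.mpr ⟨hij, Finset.mem_univ j⟩), if_pos rfl]
    congr 1
    exact Finset.sum_congr rfl (fun l hl => if_neg (Finset.ne_of_mem_erase hl))
  have e2 : ∑ l ∈ (Finset.univ.erase i).erase j, y l
      = (∑ l ∈ Finset.univ.erase i, y l) - y j := by
    rw [eq_sub_iff_add_eq, add_comm]
    exact Finset.add_sum_erase _ y (Finset.mem_erase.mpr ⟨hij, Finset.mem_univ j⟩)
  rw [h1, h2, e2, sum_erase_eq_sub' i y]; ring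

def DsetPos (n k : ℕ) (β : ℝ) : Set (EuclideanSpace ℝ (Fin n)) :=
  {v | (∃ S : Finset (Fin n), S.card ≤ k ∧ ∀ i ∉ S, v i = 0) ∧ (∀ i, 0 ≤ v i) ∧ ∀ i, v i ≤ β}

lemma core_base {n k : ℕ} {β : ℝ} (hβ : 0 < β) {y : EuclideanSpace ℝ (Fin n)}
    (h0 : ∀ i, 0 ≤ y i) (hub : ∀ i, y i ≤ β) (hsum : (∑ i, y i) ≤ k * β)
    (hflat : ∀ i, y i = 0 ∨ y i = β) : y ∈ DsetPos n k β := by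
  refine ⟨⟨Finset.univ.filter (fun i => y i ≠ 0), ?_, fun i hi => ?_⟩, h0, hub⟩
  · have hsum2 : (∑ i, y i)
        = ((Finset.univ.filter (fun i => y i ≠ 0)).card : ℝ) * β := by
      rw [← Finset.sum_filter_ne_zero Finset.univ]
      rw [Finset.sum_congr rfl (fun i hi => ?_), Finset.sum_const, nsmul_eq_mul]
      rcases hflat i with h | h
      · exact absurd h (Finset.mem_filter.mp hi).2
      · exact h
    by_contra hc
    have hlt : (k : ℝ) < ((Finset.univ.filter (fun i => y i ≠ 0)).card : ℝ) := by
      exact_mod_cast Nat.lt_of_not_le hc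
    nlinarith [hsum2 ▸ hsum]
  · by_contra hne
    exact hi (Finset.mem_filter.mpr ⟨Finset.mem_univ i, hne⟩)

lemma core_induction {n k : ℕ} {β : ℝ} (hβ : 0 < β) :
    ∀ (M : ℕ) (y : EuclideanSpace ℝ (Fin n)), (∀ i, 0 ≤ y i) → (∀ i, y i ≤ β) →
      (∑ i, y i) ≤ k * β →
      2 * (Finset.univ.filter fun i => 0 < y i ∧ y i < β).card +
          (if (∑ i, y i) = k * β then 0 else 1) ≤ M →
      y ∈ convexHull ℝ (DsetPos n k β) := by
  intro M
  induction M with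
  | zero =>
    intro y h0 hub hsum hM
    have hF : (Finset.univ.filter fun i => 0 < y i ∧ y i < β).card = 0 := by omega
    have hflat : ∀ i, y i = 0 ∨ y i = β := by
      intro i
      have : i ∉ Finset.univ.filter fun i => 0 < y i ∧ y i < β := by
        rw [Finset.card_eq_zero] at hF; simp [hF]
      simp only [Finset.mem_filter, Finset.mem_univ, true_and, not_and, not_lt] at this
      rcases lt_or_eq_of_le (h0 i) with h | h
      · exact Or.inr (le_antisymm (hub i) (this h))
      · exact Or.inl h.symm
    exact subset_convexHull ℝ _ (core_base hβ h0 hub hsum hflat)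
  | succ M ih =>
    intro y h0 hub hsum hM
    set F := (Finset.univ.filter fun i => 0 < y i ∧ y i < β).card with hFdef
    by_cases hF0 : F = 0
    · have hflat : ∀ i, y i = 0 ∨ y i = β := by
        intro i
        have : i ∉ Finset.univ.filter fun i => 0 < y i ∧ y i < β := by
          rw [hFdef] at hF0; rw [Finset.card_eq_zero] at hF0; simp [hF0]
        simp only [Finset.mem_filter, Finset.mem_univ, true_and, not_and, not_lt] at this
        rcases lt_or_eq_of_le (h0 i) with h | h
        · exact Or.inr (le_antisymm (hub i) (this h))
        · exact Or.inl h.symm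
      exact subset_convexHull ℝ _ (core_base hβ h0 hub hsum hflat)
    · obtain ⟨i, hiF⟩ := Finset.card_pos.mp (Nat.pos_of_ne_zero hF0)
      have hi : 0 < y i ∧ y i < β := by
        simpa using (Finset.mem_filter.mp hiF).2
      by_cases htight : (∑ l, y l) = k * β
      · -- tight case
        -- find a second fractional coordinate
        have hj : ∃ j, j ≠ i ∧ 0 < y j ∧ y j < β := by
          by_contra hcon
          push_neg at hcon
          -- all other coordinates are 0 or β
          have hoth : ∀ l, l ≠ i → y l = 0 ∨ y l = β := by
            intro l hl
            rcases lt_or_eq_of_le (h0 l) with h | h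
            · exact Or.inr (le_antisymm (hub l) (hcon l hl h))
            · exact Or.inl h.symm
          -- compute the sum
          set S := (Finset.univ.erase i).filter (fun l => y l = β) with hSdef
          have hsum3 : (∑ l, y l) = y i + (S.card : ℝ) * β := by
            rw [← Finset.add_sum_erase _ y (Finset.mem_univ i)]
            congr 1
            have : ∀ l ∈ Finset.univ.erase i, y l = if y l = β then β else 0 := by
              intro l hl
              rcases hoth l (Finset.ne_of_mem_erase hl) with h | h
              · rw [h]; rw [if_neg]; intro hc; rw [← hc] at hβ; exact lt_irrefl _ hβ
              · rw [h, if_pos rfl]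
            rw [Finset.sum_congr rfl this, ← Finset.sum_filter, ← hSdef,
              Finset.sum_const, nsmul_eq_mul]
          have hyi : y i = ((k : ℝ) - S.card) * β := by
            rw [htight] at hsum3; linarith
          have h1 : (0:ℝ) < ((k : ℝ) - S.card) * β := hyi ▸ hi.1
          have h2 : ((k : ℝ) - S.card) * β < β := hyi ▸ hi.2
          have h3 : (0:ℝ) < (k : ℝ) - S.card := by
            by_contra hc; push_neg at hc; nlinarith
          have h4 : (k : ℝ) - S.card < 1 := by nlinarith
          have h5 : (S.card : ℝ) < k := by linarith
          have h6 : S.card < k := by exact_mod_cast h5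
          have h7 : (1:ℝ) ≤ (k:ℝ) - S.card := by
            have : S.card + 1 ≤ k := h6
            have := (Nat.cast_le (α := ℝ)).mpr this
            push_cast at this ⊢
            linarith
          linarith
        obtain ⟨j, hji, hj1, hj2⟩ := hj
        set tp := min (β - y i) (y j) with htpdef
        set tm := min (β - y j) (y i) with htmdef
        have htppos : 0 < tp := lt_min (by linarith [hi.2]) hj1
        have htmpos : 0 < tm := lt_min (by linarith [hj2]) hi.1
        set yp : EuclideanSpace ℝ (Fin n) :=
          WithLp.toLp 2 (fun l => if l = i then y i + tp else if l = j then y j - tp else y l) with hypdef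
        set ym : EuclideanSpace ℝ (Fin n) :=
          WithLp.toLp 2 (fun l => if l = i then y i - tm else if l = j then y j + tm else y l) with hymdef
        have hypapp : ∀ l, yp l = if l = i then y i + tp else if l = j then y j - tp else y l :=
          fun l => rfl
        have hymapp : ∀ l, ym l = if l = i then y i - tm else if l = j then y j + tm else y l :=
          fun l => rfl
        have hsump : (∑ l, yp l) = ∑ l, y l := by
          rw [Finset.sum_congr rfl (fun l _ => hypapp l), sum_if_two hji]
          ring
        have hsumm : (∑ l, ym l) = ∑ l, y l := by
          rw [Finset.sum_congr rfl (fun l _ => hymapp l), sum_if_two hji]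
          ring
        -- bounds for yp
        have h0p : ∀ l, 0 ≤ yp l := by
          intro l; rw [hypapp]
          by_cases hl : l = i
          · rw [if_pos hl]; have := h0 i; linarith
          · rw [if_neg hl]
            by_cases hl2 : l = j
            · rw [if_pos hl2]
              have : tp ≤ y j := min_le_right _ _
              linarith
            · rw [if_neg hl2]; exact h0 l
        have hubp : ∀ l, yp l ≤ β := by
          intro l; rw [hypapp]
          by_cases hl : l = i
          · rw [if_pos hl]
            have : tp ≤ β - y i := min_le_left _ _
            linarith
          · rw [if_neg hl]
            by_cases hl2 : l = j
            · rw [if_pos hl2]; have := hub j; linarith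
            · rw [if_neg hl2]; exact hub l
        have h0m : ∀ l, 0 ≤ ym l := by
          intro l; rw [hymapp]
          by_cases hl : l = i
          · rw [if_pos hl]
            have : tm ≤ y i := min_le_right _ _
            linarith
          · rw [if_neg hl]
            by_cases hl2 : l = j
            · rw [if_pos hl2]; have := h0 j; linarith
            · rw [if_neg hl2]; exact h0 l
        have hubm : ∀ l, ym l ≤ β := by
          intro l; rw [hymapp]
          by_cases hl : l = i
          · rw [if_pos hl]; have := hub i; linarith
          · rw [if_neg hl]
            by_cases hl2 : l = j
            · rw [if_pos hl2]
              have : tm ≤ β - y j := min_le_left _ _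
              linarith
            · rw [if_neg hl2]; exact hub l
        -- filter cards decrease
        have hjF : j ∈ Finset.univ.filter fun l => 0 < y l ∧ y l < β := by
          simp [hj1, hj2]
        have hcardp : (Finset.univ.filter fun l => 0 < yp l ∧ yp l < β).card + 1 ≤ F := by
          rcases min_cases (β - y i) (y j) with ⟨hmin, _⟩ | ⟨hmin, _⟩
          · -- i leaves
            have htpv : tp = β - y i := by rw [htpdef]; exact hmin
            have hsub : (Finset.univ.filter fun l => 0 < yp l ∧ yp l < β)
                ⊆ (Finset.univ.filter fun l => 0 < y l ∧ y l < β).erase i := by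
              intro l hl
              simp only [Finset.mem_filter, Finset.mem_univ, true_and] at hl
              rw [Finset.mem_erase]
              refine ⟨?_, ?_⟩
              · rintro rfl
                rw [hypapp, if_pos rfl] at hl
                linarith [hl.2]
              · simp only [Finset.mem_filter, Finset.mem_univ, true_and]
                rw [hypapp] at hl
                by_cases hli : l = i
                · exfalso; rw [if_pos hli, hli] at hl; linarith [hl.2]
                · rw [if_neg hli] at hl
                  by_cases hlj : l = j
                  · subst hlj; exact ⟨hj1, hj2⟩
                  · rw [if_neg hlj] at hl; exact hl
            have := Finset.card_le_card hsub
            rw [Finset.card_erase_of_mem hiF] at this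
            omega
          · -- j leaves
            have htpv : tp = y j := by rw [htpdef]; exact hmin
            have hsub : (Finset.univ.filter fun l => 0 < yp l ∧ yp l < β)
                ⊆ (Finset.univ.filter fun l => 0 < y l ∧ y l < β).erase j := by
              intro l hl
              simp only [Finset.mem_filter, Finset.mem_univ, true_and] at hl
              rw [Finset.mem_erase]
              refine ⟨?_, ?_⟩
              · rintro rfl
                rw [hypapp, if_neg hji, if_pos rfl] at hl
                linarith [hl.1]
              · simp only [Finset.mem_filter, Finset.mem_univ, true_and]
                rw [hypapp] at hl
                by_cases hli : l = i
                · subst hli; exact hi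
                · rw [if_neg hli] at hl
                  by_cases hlj : l = j
                  · exfalso; rw [if_pos hlj, hlj] at hl; linarith [hl.1]
                  · rw [if_neg hlj] at hl; exact hl
            have := Finset.card_le_card hsub
            rw [Finset.card_erase_of_mem hjF] at this
            omega
        have hcardm : (Finset.univ.filter fun l => 0 < ym l ∧ ym l < β).card + 1 ≤ F := by
          rcases min_cases (β - y j) (y i) with ⟨hmin, _⟩ | ⟨hmin, _⟩
          · -- j leaves (hits β)
            have htmv : tm = β - y j := by rw [htmdef]; exact hmin
            have hsub : (Finset.univ.filter fun l => 0 < ym l ∧ ym l < β)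
                ⊆ (Finset.univ.filter fun l => 0 < y l ∧ y l < β).erase j := by
              intro l hl
              simp only [Finset.mem_filter, Finset.mem_univ, true_and] at hl
              rw [Finset.mem_erase]
              refine ⟨?_, ?_⟩
              · rintro rfl
                rw [hymapp, if_neg hji, if_pos rfl] at hl
                linarith [hl.2]
              · simp only [Finset.mem_filter, Finset.mem_univ, true_and]
                rw [hymapp] at hl
                by_cases hli : l = i
                · subst hli; exact hi
                · rw [if_neg hli] at hl
                  by_cases hlj : l = j
                  · exfalso; rw [if_pos hlj, hlj] at hl; linarith [hl.2]
                  · rw [if_neg hlj] at hl; exact hl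
            have := Finset.card_le_card hsub
            rw [Finset.card_erase_of_mem hjF] at this
            omega
          · -- i leaves (hits 0)
            have htmv : tm = y i := by rw [htmdef]; exact hmin
            have hsub : (Finset.univ.filter fun l => 0 < ym l ∧ ym l < β)
                ⊆ (Finset.univ.filter fun l => 0 < y l ∧ y l < β).erase i := by
              intro l hl
              simp only [Finset.mem_filter, Finset.mem_univ, true_and] at hl
              rw [Finset.mem_erase]
              refine ⟨?_, ?_⟩
              · rintro rfl
                rw [hymapp, if_pos rfl] at hl
                linarith [hl.1]
              · simp only [Finset.mem_filter, Finset.mem_univ, true_and]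
                rw [hymapp] at hl
                by_cases hli : l = i
                · exfalso; rw [if_pos hli, hli] at hl; linarith [hl.1]
                · rw [if_neg hli] at hl
                  by_cases hlj : l = j
                  · subst hlj; exact ⟨hj1, hj2⟩
                  · rw [if_neg hlj] at hl; exact hl
            have := Finset.card_le_card hsub
            rw [Finset.card_erase_of_mem hiF] at this
            omega
        -- measure bookkeeping: current measure = 2F (tight), ≤ M+1
        have hMF : 2 * F ≤ M + 1 := by
          rw [if_pos htight] at hM; omega
        have hmp : 2 * (Finset.univ.filter fun l => 0 < yp l ∧ yp l < β).card +
            (if (∑ l, yp l) = k * β then 0 else 1) ≤ M := by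
          have : (if (∑ l, yp l) = k * β then 0 else 1) ≤ 1 := by split <;> omega
          omega
        have hmm2 : 2 * (Finset.univ.filter fun l => 0 < ym l ∧ ym l < β).card +
            (if (∑ l, ym l) = k * β then 0 else 1) ≤ M := by
          have : (if (∑ l, ym l) = k * β then 0 else 1) ≤ 1 := by split <;> omega
          omega
        have hmemp := ih yp h0p hubp (by rw [hsump]; exact hsum) hmp
        have hmemm := ih ym h0m hubm (by rw [hsumm]; exact hsum) hmm2
        -- convex combination
        have hts : 0 < tp + tm := by linarith
        have hcomb : (tm / (tp + tm)) • yp + (tp / (tp + tm)) • ym = y := by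
          ext l
          show (tm / (tp + tm)) * yp l + (tp / (tp + tm)) * ym l = y l
          rw [hypapp, hymapp]
          by_cases hli : l = i
          · rw [if_pos hli, if_pos hli, hli]
            field_simp
            ring
          · rw [if_neg hli, if_neg hli]
            by_cases hlj : l = j
            · rw [if_pos hlj, if_pos hlj, hlj]
              field_simp
              ring
            · rw [if_neg hlj, if_neg hlj]
              field_simp
              ring
        rw [← hcomb]
        exact (convex_convexHull ℝ (DsetPos n k β)) hmemp hmemm
          (div_nonneg (le_of_lt htmpos) (le_of_lt hts))
          (div_nonneg (le_of_lt htppos) (le_of_lt hts))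
          (by
            have hne : tp + tm ≠ 0 := ne_of_gt hts
            field_simp
            ring)
      · -- slack case
        set slack := k * β - (∑ l, y l) with hslackdef
        have hslack : 0 < slack := by
          have := lt_of_le_of_ne hsum htight
          simp only [hslackdef]; linarith
        set c := min β (y i + slack) with hcdef
        have hcpos : 0 < c := lt_min hβ (by linarith [hi.1])
        have hylec : y i ≤ c := le_min (le_of_lt hi.2) (by linarith)
        set y1 : EuclideanSpace ℝ (Fin n) :=
          WithLp.toLp 2 (fun l => if l = i then c else y l) with hy1def
        set y0 : EuclideanSpace ℝ (Fin n) :=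
          WithLp.toLp 2 (fun l => if l = i then 0 else y l) with hy0def
        have hy1app : ∀ l, y1 l = if l = i then c else y l := fun l => rfl
        have hy0app : ∀ l, y0 l = if l = i then 0 else y l := fun l => rfl
        have hsum1 : (∑ l, y1 l) = c + ((∑ l, y l) - y i) := by
          rw [Finset.sum_congr rfl (fun l _ => hy1app l), sum_if_one]
        have hsum0 : (∑ l, y0 l) = (∑ l, y l) - y i := by
          rw [Finset.sum_congr rfl (fun l _ => hy0app l), sum_if_one]; ring
        have hsum1le : (∑ l, y1 l) ≤ k * β := by
          rw [hsum1]
          have : c ≤ y i + slack := min_le_right _ _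
          simp only [hslackdef] at this ⊢
          linarith
        have hsum0le : (∑ l, y0 l) ≤ k * β := by
          rw [hsum0]; linarith [hi.1]
        have h01 : ∀ l, 0 ≤ y1 l := by
          intro l; rw [hy1app]
          by_cases hl : l = i
          · rw [if_pos hl]; exact le_of_lt hcpos
          · rw [if_neg hl]; exact h0 l
        have hub1 : ∀ l, y1 l ≤ β := by
          intro l; rw [hy1app]
          by_cases hl : l = i
          · rw [if_pos hl]; exact min_le_left _ _
          · rw [if_neg hl]; exact hub l
        have h00 : ∀ l, 0 ≤ y0 l := by
          intro l; rw [hy0app]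
          by_cases hl : l = i
          · rw [if_pos hl]
          · rw [if_neg hl]; exact h0 l
        have hub0 : ∀ l, y0 l ≤ β := by
          intro l; rw [hy0app]
          by_cases hl : l = i
          · rw [if_pos hl]; exact le_of_lt hβ
          · rw [if_neg hl]; exact hub l
        -- cards
        have hcard0 : (Finset.univ.filter fun l => 0 < y0 l ∧ y0 l < β).card + 1 ≤ F := by
          have hsub : (Finset.univ.filter fun l => 0 < y0 l ∧ y0 l < β)
              ⊆ (Finset.univ.filter fun l => 0 < y l ∧ y l < β).erase i := by
            intro l hl
            simp only [Finset.mem_filter, Finset.mem_univ, true_and] at hl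
            rw [Finset.mem_erase]
            constructor
            · rintro rfl
              rw [hy0app, if_pos rfl] at hl
              exact absurd hl.1 (lt_irrefl 0)
            · simp only [Finset.mem_filter, Finset.mem_univ, true_and]
              rw [hy0app] at hl
              by_cases hli : l = i
              · rw [if_pos hli] at hl; exact absurd hl.1 (lt_irrefl 0)
              · rw [if_neg hli] at hl; exact hl
          have := Finset.card_le_card hsub
          rw [Finset.card_erase_of_mem hiF] at this
          omega
        have hMF : 2 * F + 1 ≤ M + 1 := by
          rw [if_neg htight] at hM; omega
        have hm0 : 2 * (Finset.univ.filter fun l => 0 < y0 l ∧ y0 l < β).card +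
            (if (∑ l, y0 l) = k * β then 0 else 1) ≤ M := by
          have : (if (∑ l, y0 l) = k * β then 0 else 1) ≤ 1 := by split <;> omega
          omega
        have hm1 : 2 * (Finset.univ.filter fun l => 0 < y1 l ∧ y1 l < β).card +
            (if (∑ l, y1 l) = k * β then 0 else 1) ≤ M := by
          rcases min_cases β (y i + slack) with ⟨hmin, _⟩ | ⟨hmin, hlt⟩
          · -- c = β : coordinate i leaves the filter
            have hsub : (Finset.univ.filter fun l => 0 < y1 l ∧ y1 l < β)
                ⊆ (Finset.univ.filter fun l => 0 < y l ∧ y l < β).erase i := by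
              intro l hl
              simp only [Finset.mem_filter, Finset.mem_univ, true_and] at hl
              rw [Finset.mem_erase]
              constructor
              · rintro rfl
                rw [hy1app, if_pos rfl] at hl
                have hcv : c = β := by rw [hcdef]; exact hmin
                exact absurd (hcv ▸ hl.2) (lt_irrefl β)
              · simp only [Finset.mem_filter, Finset.mem_univ, true_and]
                rw [hy1app] at hl
                by_cases hli : l = i
                · exfalso
                  rw [if_pos hli] at hl
                  have hcv : c = β := by rw [hcdef]; exact hmin
                  exact absurd (hcv ▸ hl.2) (lt_irrefl β)
                · rw [if_neg hli] at hl; exact hl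
            have hcc := Finset.card_le_card hsub
            rw [Finset.card_erase_of_mem hiF] at hcc
            have : (if (∑ l, y1 l) = k * β then 0 else 1) ≤ 1 := by split <;> omega
            omega
          · -- c = y i + slack : sum becomes tight
            have hflagzero : (∑ l, y1 l) = k * β := by
              have hcv : c = y i + slack := by rw [hcdef]; exact hmin
              rw [hsum1, hcv]
              simp only [hslackdef]
              ring
            have hsub : (Finset.univ.filter fun l => 0 < y1 l ∧ y1 l < β)
                ⊆ (Finset.univ.filter fun l => 0 < y l ∧ y l < β) := by
              intro l hl
              simp only [Finset.mem_filter, Finset.mem_univ, true_and] at hl ⊢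
              rw [hy1app] at hl
              by_cases hli : l = i
              · subst hli; exact hi
              · rw [if_neg hli] at hl; exact hl
            have hcc := Finset.card_le_card hsub
            rw [if_pos hflagzero]
            omega
        have hmem1 := ih y1 h01 hub1 hsum1le hm1
        have hmem0 := ih y0 h00 hub0 hsum0le hm0
        have hcomb : (y i / c) • y1 + (1 - y i / c) • y0 = y := by
          ext l
          show (y i / c) * y1 l + (1 - y i / c) * y0 l = y l
          rw [hy1app, hy0app]
          by_cases hli : l = i
          · rw [if_pos hli, if_pos hli, hli]
            field_simp
            ring
          · rw [if_neg hli, if_neg hli]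
            ring
        rw [← hcomb]
        exact (convex_convexHull ℝ (DsetPos n k β)) hmem1 hmem0
          (div_nonneg (h0 i) (le_of_lt hcpos))
          (by
            have : y i / c ≤ 1 := (div_le_one hcpos).mpr hylec
            linarith)
          (by ring)

lemma mem_convexHull_abs {n k : ℕ} {β : ℝ} (hβ : 0 < β) (y : EuclideanSpace ℝ (Fin n))
    (hinf : ∀ i, |y i| ≤ β) (h1 : ∑ i, |y i| ≤ k * β) :
    y ∈ convexHull ℝ {v : EuclideanSpace ℝ (Fin n) |
      (∃ S : Finset (Fin n), S.card ≤ k ∧ ∀ i ∉ S, v i = 0) ∧ ∀ i, |v i| ≤ β} := by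
  set ε : Fin n → ℝ := fun i => if y i < 0 then -1 else 1 with hεdef
  have hεabs : ∀ i, |ε i| = 1 := by
    intro i; rw [hεdef]; dsimp only; split <;> simp
  set y' : EuclideanSpace ℝ (Fin n) := WithLp.toLp 2 (fun i => |y i|) with hy'def
  have hy'app : ∀ i, y' i = |y i| := fun _ => rfl
  have hmem' : y' ∈ convexHull ℝ (DsetPos n k β) := by
    apply core_induction hβ
      (2 * (Finset.univ.filter fun i => 0 < y' i ∧ y' i < β).card + 1)
      y' (fun i => abs_nonneg (y i)) (fun i => hinf i)
      (by rw [Finset.sum_congr rfl (fun i _ => hy'app i)] at *; exact h1)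
    have : (if (∑ i, y' i) = k * β then 0 else 1) ≤ 1 := by split <;> omega
    omega
  set L : EuclideanSpace ℝ (Fin n) →ₗ[ℝ] EuclideanSpace ℝ (Fin n) :=
    { toFun := fun v => (WithLp.toLp 2 (fun i => ε i * v i) : EuclideanSpace ℝ (Fin n))
      map_add' := by
        intro a b; ext i
        show ε i * (a + b) i = (WithLp.toLp 2 (fun i => ε i * a i) : EuclideanSpace ℝ (Fin n)) i
          + (WithLp.toLp 2 (fun i => ε i * b i) : EuclideanSpace ℝ (Fin n)) i
        have : (a + b) i = a i + b i := rfl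
        rw [this]; ring
      map_smul' := by
        intro c a; ext i
        show ε i * (c • a) i = (c • (WithLp.toLp 2 (fun i => ε i * a i) : EuclideanSpace ℝ (Fin n))) i
        have h1' : (c • a) i = c * a i := rfl
        have h2' : (c • (WithLp.toLp 2 (fun i => ε i * a i) : EuclideanSpace ℝ (Fin n))) i
            = c * (ε i * a i) := rfl
        rw [h1', h2']; ring } with hLdef
  have hLy' : L y' = y := by
    ext i
    show ε i * |y i| = y i
    rw [hεdef]; dsimp only
    rcases lt_or_ge (y i) 0 with h | h
    · rw [if_pos h, abs_of_neg h]; ring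
    · rw [if_neg (not_lt.mpr h), abs_of_nonneg h]; ring
  have himg := Set.mem_image_of_mem L hmem'
  rw [L.image_convexHull] at himg
  rw [hLy'] at himg
  refine convexHull_mono ?_ himg
  rintro w ⟨v, ⟨⟨S, hS, hSo⟩, hv0, hvub⟩, rfl⟩
  constructor
  · refine ⟨S, hS, fun i hi => ?_⟩
    show ε i * v i = 0
    rw [hSo i hi, mul_zero]
  · intro i
    show |ε i * v i| ≤ β
    rw [abs_mul, hεabs i, one_mul, abs_of_nonneg (hv0 i)]
    exact hvub i

lemma atomicNorm_zero {n k : ℕ} (hn : 0 < n) (hk : 0 < k) :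
    atomicNorm (sigAtoms n k) (0 : EuclideanSpace ℝ (Fin n)) = 0 := by
  refine le_antisymm (atomicNorm_le le_rfl ?_) (atomicNorm_nonneg _ _)
  have hne : (closure (convexHull ℝ (sigAtoms n k))).Nonempty :=
    ⟨0, subset_closure (zero_mem_convexHull_sigAtoms hn hk)⟩
  rw [Set.zero_smul_set hne]
  exact rfl

lemma norm_sparse_le {n k : ℕ} {β : ℝ} (hβ : 0 ≤ β) {v : EuclideanSpace ℝ (Fin n)}
    (hv : v ∈ sparse n k) (hub : ∀ i, |v i| ≤ β) : ‖v‖ ≤ Real.sqrt k * β := by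
  obtain ⟨S, hS, hSo⟩ := hv
  rw [EuclideanSpace.norm_eq]
  have h1 : ∑ i, ‖v i‖ ^ 2 = ∑ i ∈ S, ‖v i‖ ^ 2 := by
    symm
    apply Finset.sum_subset (Finset.subset_univ S)
    intro i _ hi
    rw [hSo i hi]
    simp
  have h2 : ∑ i ∈ S, ‖v i‖ ^ 2 ≤ ∑ _i ∈ S, β ^ 2 := by
    apply Finset.sum_le_sum
    intro i _
    have := hub i
    rw [Real.norm_eq_abs]
    nlinarith [abs_nonneg (v i)]
  have h3 : (∑ _i ∈ S, β ^ 2) = S.card * β ^ 2 := by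
    rw [Finset.sum_const, nsmul_eq_mul]
  have h4 : (S.card : ℝ) * β ^ 2 ≤ k * β ^ 2 := by
    apply mul_le_mul_of_nonneg_right _ (sq_nonneg β)
    exact_mod_cast hS
  calc Real.sqrt (∑ i, ‖v i‖ ^ 2) ≤ Real.sqrt (k * β ^ 2) := by
        apply Real.sqrt_le_sqrt
        rw [h1]; linarith
  _ = Real.sqrt k * β := by
        rw [Real.sqrt_mul (Nat.cast_nonneg k), Real.sqrt_sq hβ]

lemma atomicNorm_sig_le {n k : ℕ} (hn : 0 < n) (hk : 0 < k) {β : ℝ} (hβ : 0 ≤ β)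
    {y : EuclideanSpace ℝ (Fin n)} (hinf : ∀ i, |y i| ≤ β) (h1 : ∑ i, |y i| ≤ k * β) :
    atomicNorm (sigAtoms n k) y ≤ Real.sqrt k * β := by
  rcases eq_or_lt_of_le hβ with hβ0 | hβpos
  · have hy0 : y = 0 := by
      ext i
      have := hinf i
      rw [← hβ0] at this
      have := abs_nonneg (y i)
      have : |y i| = 0 := le_antisymm (by linarith) (by positivity)
      exact abs_eq_zero.mp this
    rw [hy0, atomicNorm_zero hn hk, ← hβ0, mul_zero]
  · have hmem := mem_convexHull_abs hβpos y hinf h1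
    have hsk : 0 < Real.sqrt k * β := by
      apply mul_pos _ hβpos
      apply Real.sqrt_pos.mpr
      exact_mod_cast hk
    have hsub : {v : EuclideanSpace ℝ (Fin n) |
        (∃ S : Finset (Fin n), S.card ≤ k ∧ ∀ i ∉ S, v i = 0) ∧ ∀ i, |v i| ≤ β}
        ⊆ (Real.sqrt k * β) • closure (convexHull ℝ (sigAtoms n k)) := by
      rintro v ⟨hvs, hvub⟩
      have hvn : ‖v‖ ≤ Real.sqrt k * β := norm_sparse_le (le_of_lt hβpos) hvs hvub
      rw [Set.mem_smul_set]
      refine ⟨(Real.sqrt k * β)⁻¹ • v, ?_, ?_⟩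
      · apply subset_closure
        apply sparse_small_mem_convexHull hn hk
        · obtain ⟨S, hS, hSo⟩ := hvs
          refine ⟨S, hS, fun i hi => ?_⟩
          show (Real.sqrt k * β)⁻¹ * v i = 0
          rw [hSo i hi, mul_zero]
        · rw [norm_smul, Real.norm_eq_abs, abs_of_nonneg (inv_nonneg.mpr (le_of_lt hsk))]
          rw [inv_mul_le_iff₀ hsk, mul_one]
          exact hvn
      · rw [smul_inv_smul₀ (ne_of_gt hsk)]
    have hconv : Convex ℝ ((Real.sqrt k * β) • closure (convexHull ℝ (sigAtoms n k))) :=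
      ((convex_convexHull ℝ (sigAtoms n k)).closure).smul _
    have := convexHull_min hsub hconv hmem
    exact atomicNorm_le (le_of_lt hsk) this

lemma cross_sum_le {n : ℕ} (f : Fin n → ℝ) (hf : ∀ i, 0 ≤ f i) (A B : Finset (Fin n))
    (hcard : A.card ≤ B.card) (hcross : ∀ a ∈ A, ∀ b ∈ B, f a ≤ f b) :
    ∑ a ∈ A, f a ≤ ∑ b ∈ B, f b := by
  rcases B.eq_empty_or_nonempty with rfl | hB
  · have hA : A = ∅ := Finset.card_eq_zero.mp (le_antisymm (by simpa using hcard) (Nat.zero_le _))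
    simp [hA]
  · obtain ⟨b0, hb0, hb0eq⟩ := Finset.exists_mem_eq_inf' hB f
    set μ := B.inf' hB f with hμdef
    have hμ0 : 0 ≤ μ := by rw [hb0eq]; exact hf b0
    have h1 : ∑ a ∈ A, f a ≤ (A.card : ℝ) * μ := by
      calc ∑ a ∈ A, f a ≤ ∑ _a ∈ A, μ := by
            apply Finset.sum_le_sum
            intro a ha
            rw [hb0eq]
            exact hcross a ha b0 hb0
      _ = (A.card : ℝ) * μ := by rw [Finset.sum_const, nsmul_eq_mul]
    have h2 : (B.card : ℝ) * μ ≤ ∑ b ∈ B, f b := by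
      calc (B.card : ℝ) * μ = ∑ _b ∈ B, μ := by rw [Finset.sum_const, nsmul_eq_mul]
      _ ≤ ∑ b ∈ B, f b := Finset.sum_le_sum (fun b hb => Finset.inf'_le f hb)
    have h3 : (A.card : ℝ) * μ ≤ (B.card : ℝ) * μ := by
      apply mul_le_mul_of_nonneg_right _ hμ0
      exact_mod_cast hcard
    linarith

lemma l1_sum_compl_le {n : ℕ} (z x : EuclideanSpace ℝ (Fin n)) (S : Finset (Fin n))
    (hSo : ∀ i ∉ S, x i = 0) (hdesc : ∑ i, |x i + z i| ≤ ∑ i, |x i|) :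
    ∑ i ∈ Finset.univ \ S, |z i| ≤ ∑ i ∈ S, |z i| := by
  have e1 : ∑ i ∈ Finset.univ \ S, |x i + z i| + ∑ i ∈ S, |x i + z i| = ∑ i, |x i + z i| :=
    Finset.sum_sdiff (Finset.subset_univ S)
  have e2 : ∑ i ∈ Finset.univ \ S, |x i| + ∑ i ∈ S, |x i| = ∑ i, |x i| :=
    Finset.sum_sdiff (Finset.subset_univ S)
  have e3 : ∑ i ∈ Finset.univ \ S, |x i + z i| = ∑ i ∈ Finset.univ \ S, |z i| := by
    apply Finset.sum_congr rfl
    intro i hi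
    rw [hSo i (Finset.mem_sdiff.mp hi).2, zero_add]
  have e4 : ∑ i ∈ Finset.univ \ S, |x i| = 0 := by
    apply Finset.sum_eq_zero
    intro i hi
    rw [hSo i (Finset.mem_sdiff.mp hi).2, abs_zero]
  have e5 : ∑ i ∈ S, (|x i| - |x i + z i|) ≤ ∑ i ∈ S, |z i| := by
    apply Finset.sum_le_sum
    intro i _
    calc |x i| - |x i + z i| ≤ |x i - (x i + z i)| := abs_sub_abs_le_abs_sub _ _
    _ = |z i| := by rw [show x i - (x i + z i) = -z i by ring, abs_neg]
  rw [Finset.sum_sub_distrib] at e5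
  linarith

lemma DSigma_l1_le_one {n k : ℕ} (hk : 0 < k) (hn : 0 < n) :
    DSigma n k (fun x : EuclideanSpace ℝ (Fin n) => ∑ i, |x i|) ≤ 1 := by
  apply sSup_le
  rintro v ⟨z, hz, hz0, T, hTcard, hdom, rfl⟩
  have hTne : T.Nonempty := Finset.card_pos.mp (by omega)
  -- positivity of the denominator
  have hzex : ∃ i ∈ T, z i ≠ 0 := by
    by_contra hc
    push_neg at hc
    apply hz0
    ext j
    by_cases hj : j ∈ T
    · exact hc j hj
    · obtain ⟨i1, hi1⟩ := hTne
      have := hdom i1 hi1 j hj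
      rw [hc i1 hi1, abs_zero] at this
      have := abs_nonneg (z j)
      show z j = 0
      have : |z j| = 0 := le_antisymm (by linarith) (by positivity)
      exact abs_eq_zero.mp this
  obtain ⟨i0, hi0T, hi0⟩ := hzex
  have hTpos : 0 < ∑ i ∈ T, z i ^ 2 := by
    apply Finset.sum_pos' (fun i _ => sq_nonneg _)
    exact ⟨i0, hi0T, by positivity⟩
  -- extract the descent point
  simp only [descentCone, Set.mem_iUnion] at hz
  obtain ⟨x, hx, hzx⟩ := hz
  obtain ⟨S, hScard, hSo⟩ := hx
  have hdesc : ∑ i, |x i + z i| ≤ ∑ i, |x i| := hzx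
  have h1 := l1_sum_compl_le z x S hSo hdesc
  -- ∑_S |z| ≤ ∑_T |z|
  have hST : ∑ i ∈ S, |z i| ≤ ∑ i ∈ T, |z i| := by
    have e1 : ∑ i ∈ S ∩ T, |z i| + ∑ i ∈ S \ T, |z i| = ∑ i ∈ S, |z i| :=
      Finset.sum_inter_add_sum_sdiff S T _
    have e2 : ∑ i ∈ T ∩ S, |z i| + ∑ i ∈ T \ S, |z i| = ∑ i ∈ T, |z i| :=
      Finset.sum_inter_add_sum_sdiff T S _
    have e3 : ∑ i ∈ S ∩ T, |z i| = ∑ i ∈ T ∩ S, |z i| := by rw [Finset.inter_comm]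
    have hcross : ∀ a ∈ S \ T, ∀ b ∈ T \ S, |z a| ≤ |z b| := by
      intro a ha b hb
      exact hdom b (Finset.mem_sdiff.mp hb).1 a (Finset.mem_sdiff.mp ha).2
    have hcard' : (S \ T).card ≤ (T \ S).card := by
      have q1 := Finset.card_sdiff_add_card_inter S T
      have q2 := Finset.card_sdiff_add_card_inter T S
      have q3 : (S ∩ T).card = (T ∩ S).card := by rw [Finset.inter_comm]
      omega
    have := cross_sum_le (fun i => |z i|) (fun i => abs_nonneg (z i)) _ _ hcard' hcross
    linarith
  -- ℓ¹ of the complement of T is at most ℓ¹ on T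
  have hTc : ∑ i ∈ Finset.univ \ T, |z i| ≤ ∑ i ∈ T, |z i| := by
    have q1 : ∑ i ∈ Finset.univ \ T, |z i| + ∑ i ∈ T, |z i| = ∑ i, |z i| :=
      Finset.sum_sdiff (Finset.subset_univ T)
    have q2 : ∑ i ∈ Finset.univ \ S, |z i| + ∑ i ∈ S, |z i| = ∑ i, |z i| :=
      Finset.sum_sdiff (Finset.subset_univ S)
    linarith
  -- minimum entry on T
  obtain ⟨b0, hb0T, hb0eq⟩ := Finset.exists_mem_eq_inf' hTne (fun i => |z i|)
  set m := T.inf' hTne (fun i => |z i|) with hmdef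
  have hm0 : 0 ≤ m := by rw [hb0eq]; exact abs_nonneg _
  have hmle : ∀ i ∈ T, m ≤ |z i| := fun i hi => Finset.inf'_le _ hi
  have hjm : ∀ j, j ∉ T → |z j| ≤ m := by
    intro j hj
    apply Finset.le_inf'
    intro i hi
    exact hdom i hi j hj
  set L1c := ∑ i ∈ Finset.univ \ T, |z i| with hL1cdef
  have hL1c0 : 0 ≤ L1c := Finset.sum_nonneg (fun i _ => abs_nonneg _)
  set β := max m (L1c / k) with hβdef
  have hβ0 : 0 ≤ β := le_trans hm0 (le_max_left _ _)
  have hrcapp : ∀ i, restrictCompl z T i = if i ∈ T then 0 else z i := fun _ => rfl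
  have hrc : ∀ i, |restrictCompl z T i| ≤ β := by
    intro i
    rw [hrcapp]
    by_cases hi : i ∈ T
    · rw [if_pos hi, abs_zero]; exact hβ0
    · rw [if_neg hi]
      exact le_trans (hjm i hi) (le_max_left _ _)
  have hrs : ∑ i, |restrictCompl z T i| = L1c := by
    rw [← Finset.sum_sdiff (Finset.subset_univ T)]
    have q1 : ∑ i ∈ T, |restrictCompl z T i| = 0 := by
      apply Finset.sum_eq_zero
      intro i hi
      rw [hrcapp, if_pos hi, abs_zero]
    have q2 : ∑ i ∈ Finset.univ \ T, |restrictCompl z T i| = L1c := by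
      rw [hL1cdef]
      apply Finset.sum_congr rfl
      intro i hi
      rw [hrcapp, if_neg (Finset.mem_sdiff.mp hi).2]
    rw [q1, q2, add_zero]
  have hkpos : (0:ℝ) < k := by exact_mod_cast hk
  have hrsle : ∑ i, |restrictCompl z T i| ≤ k * β := by
    rw [hrs]
    calc L1c = k * (L1c / k) := by field_simp
    _ ≤ k * β := mul_le_mul_of_nonneg_left (le_max_right _ _) (le_of_lt hkpos)
  have hbound := atomicNorm_sig_le hn hk hβ0 hrc hrsle
  have hnn := atomicNorm_nonneg (sigAtoms n k) (restrictCompl z T)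
  have hsq : (atomicNorm (sigAtoms n k) (restrictCompl z T)) ^ 2 ≤ k * β ^ 2 := by
    have hq : (Real.sqrt k * β) ^ 2 = k * β ^ 2 := by
      rw [mul_pow, Real.sq_sqrt (le_of_lt hkpos)]
    nlinarith
  have hkβ : (k:ℝ) * β ^ 2 ≤ ∑ i ∈ T, z i ^ 2 := by
    rcases max_cases m (L1c / k) with ⟨hmax, _⟩ | ⟨hmax, _⟩
    · -- β = m
      have hβm : β = m := by rw [hβdef]; exact hmax
      have q1 : ∑ i ∈ T, m ^ 2 ≤ ∑ i ∈ T, z i ^ 2 := by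
        apply Finset.sum_le_sum
        intro i hi
        have := hmle i hi
        nlinarith [abs_nonneg (z i), sq_abs (z i)]
      have q2 : (∑ _i ∈ T, m ^ 2) = k * m ^ 2 := by
        rw [Finset.sum_const, nsmul_eq_mul, hTcard]
      rw [hβm]
      linarith
    · -- β = L1c / k
      have hβm : β = L1c / k := by rw [hβdef]; exact hmax
      have hCS : (∑ i ∈ T, |z i|) ^ 2 ≤ (T.card : ℝ) * ∑ i ∈ T, |z i| ^ 2 :=
        sq_sum_le_card_mul_sum_sq
      have hzsq : ∑ i ∈ T, |z i| ^ 2 = ∑ i ∈ T, z i ^ 2 := by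
        apply Finset.sum_congr rfl
        intro i _
        rw [sq_abs]
      rw [hTcard] at hCS
      rw [hzsq] at hCS
      have hsum_abs_nonneg : 0 ≤ ∑ i ∈ T, |z i| := Finset.sum_nonneg (fun i _ => abs_nonneg _)
      have hL1le : L1c ≤ ∑ i ∈ T, |z i| := hTc
      have : L1c ^ 2 ≤ (k:ℝ) * ∑ i ∈ T, z i ^ 2 := by nlinarith
      have hid : (k:ℝ) * (L1c / k) ^ 2 = L1c ^ 2 / k := by
        field_simp
      rw [hβm, hid, div_le_iff₀ hkpos]
      linarith
  have hfin : (atomicNorm (sigAtoms n k) (restrictCompl z T)) ^ 2 / (∑ i ∈ T, z i ^ 2) ≤ 1 :=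
    (div_le_one hTpos).mpr (le_trans hsq hkβ)
  have : atomicNorm (sparse n k ∩ Metric.sphere 0 1) = atomicNorm (sigAtoms n k) := rfl
  rw [this]
  calc ENNReal.ofReal ((atomicNorm (sigAtoms n k) (restrictCompl z T)) ^ 2 / ∑ i ∈ T, z i ^ 2)
      ≤ ENNReal.ofReal 1 := ENNReal.ofReal_le_ofReal hfin
  _ = 1 := ENNReal.ofReal_one

lemma one_le_DSigma {n k : ℕ} (hk : 0 < k) (hkn : 2 * k ≤ n)
    (R : EuclideanSpace ℝ (Fin n) → ℝ) : (1 : ℝ≥0∞) ≤ DSigma n k R := by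
  have hn : 0 < n := by omega
  have hkn' : k ≤ n := by omega
  -- choose a k-set maximizing R on flat indicators
  have hpc : (Finset.powersetCard k (Finset.univ : Finset (Fin n))).Nonempty := by
    apply Finset.powersetCard_nonempty.mpr
    simpa using hkn'
  obtain ⟨S, hSmem, hSmax⟩ := Finset.exists_max_image
    (Finset.powersetCard k (Finset.univ : Finset (Fin n)))
    (fun W => R (WithLp.toLp 2 (fun i => if i ∈ W then (1:ℝ) else 0))) hpc
  obtain ⟨hSsub, hScard⟩ := Finset.mem_powersetCard.mp hSmem
  have hcard2 : k ≤ (Finset.univ \ S).card := by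
    rw [Finset.card_sdiff_of_subset (Finset.subset_univ S), Finset.card_univ, Fintype.card_fin, hScard]
    omega
  obtain ⟨T', hT'sub, hT'card⟩ := Finset.exists_subset_card_eq hcard2
  have hdisj : ∀ i ∈ T', i ∉ S := fun i hi => (Finset.mem_sdiff.mp (hT'sub hi)).2
  set x : EuclideanSpace ℝ (Fin n) := WithLp.toLp 2 (fun i => if i ∈ S then 1 else 0) with hxdef
  set w : EuclideanSpace ℝ (Fin n) := WithLp.toLp 2 (fun i => if i ∈ T' then 1 else 0) with hwdef
  set z := w - x with hzdef
  have hzapp : ∀ i, z i = (if i ∈ T' then (1:ℝ) else 0) - (if i ∈ S then 1 else 0) :=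
    fun i => rfl
  have hxz : x + z = w := by rw [hzdef]; abel
  -- z is a descent vector of R at x
  have hzdc : z ∈ descentCone R (sparse n k) := by
    have hxs : x ∈ sparse n k := ⟨S, le_of_eq hScard, fun i hi => if_neg hi⟩
    refine Set.mem_iUnion₂.mpr ⟨x, hxs, ?_⟩
    show R (x + z) ≤ R x
    rw [hxz]
    exact hSmax T' (Finset.mem_powersetCard.mpr ⟨Finset.subset_univ _, hT'card⟩)
  have hSne : S.Nonempty := Finset.card_pos.mp (by omega)
  obtain ⟨i0, hi0⟩ := hSne
  have hi0T' : i0 ∉ T' := fun h => hdisj i0 h hi0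
  have hz0 : z ≠ 0 := by
    intro hc
    have h1 : z i0 = 0 := by rw [hc]; rfl
    rw [hzapp i0, if_neg hi0T', if_pos hi0] at h1
    norm_num at h1
  have hdomS : ∀ i ∈ S, ∀ j ∉ S, |z j| ≤ |z i| := by
    intro i hiS j hjS
    have hiT' : i ∉ T' := fun h => hdisj i h hiS
    have hiz : z i = -1 := by rw [hzapp, if_neg hiT', if_pos hiS]; ring
    have hjz : |z j| ≤ 1 := by
      rw [hzapp, if_neg hjS, sub_zero]
      split <;> simp
    rw [hiz]
    simpa using hjz
  have hrc2 : restrictCompl z S = w := by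
    ext i
    show (if i ∈ S then 0 else z i) = w i
    by_cases hi : i ∈ S
    · rw [if_pos hi]
      have : i ∉ T' := fun h => hdisj i h hi
      show (0:ℝ) = if i ∈ T' then 1 else 0
      rw [if_neg this]
    · rw [if_neg hi, hzapp, if_neg hi, sub_zero]
  have hsumS : ∑ i ∈ S, z i ^ 2 = k := by
    have : ∀ i ∈ S, z i ^ 2 = 1 := by
      intro i hi
      have hiT' : i ∉ T' := fun h => hdisj i h hi
      rw [hzapp, if_neg hiT', if_pos hi]
      norm_num
    rw [Finset.sum_congr rfl this, Finset.sum_const, nsmul_eq_mul, hScard, mul_one]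
  have hkpos : (0:ℝ) < k := by exact_mod_cast hk
  -- the Σ-norm of w is at least √k
  have hwnorm : ‖w‖ = Real.sqrt k := by
    rw [EuclideanSpace.norm_eq]
    congr 1
    have : ∀ i, ‖w i‖ ^ 2 = if i ∈ T' then (1:ℝ) else 0 := by
      intro i
      show ‖(if i ∈ T' then (1:ℝ) else 0)‖ ^ 2 = _
      split <;> simp
    rw [Finset.sum_congr rfl (fun i _ => this i), ← Finset.sum_filter,
      Finset.filter_mem_eq_inter, Finset.univ_inter, Finset.sum_const, nsmul_eq_mul,
      hT'card, mul_one]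
  have hwsparse : w ∈ sparse n k := ⟨T', le_of_eq hT'card, fun i hi => if_neg hi⟩
  have hsk : (0:ℝ) < Real.sqrt k := Real.sqrt_pos.mpr hkpos
  have hwin : w ∈ Real.sqrt k • closure (convexHull ℝ (sigAtoms n k)) := by
    rw [Set.mem_smul_set]
    refine ⟨(Real.sqrt k)⁻¹ • w, ?_, smul_inv_smul₀ (ne_of_gt hsk) w⟩
    apply subset_closure
    apply sparse_small_mem_convexHull hn hk
    · obtain ⟨Sw, hSw, hSwo⟩ := hwsparse
      refine ⟨Sw, hSw, fun i hi => ?_⟩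
      show (Real.sqrt k)⁻¹ * w i = 0
      rw [hSwo i hi, mul_zero]
    · rw [norm_smul, Real.norm_eq_abs, abs_of_nonneg (inv_nonneg.mpr (le_of_lt hsk)), hwnorm,
        inv_mul_cancel₀ (ne_of_gt hsk)]
  have hslow : Real.sqrt k ≤ atomicNorm (sigAtoms n k) w := by
    have hne : {t : ℝ | 0 ≤ t ∧ w ∈ t • closure (convexHull ℝ (sigAtoms n k))}.Nonempty :=
      ⟨Real.sqrt k, ⟨le_of_lt hsk, hwin⟩⟩
    refine le_csInf hne ?_
    rintro t ⟨ht0, hmem⟩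
    have := norm_le_of_mem_smul hmem ht0
    rw [hwnorm] at this
    exact this
  -- the element of the defining set
  set s := atomicNorm (sigAtoms n k) w with hsdef
  have hs2 : (k:ℝ) ≤ s ^ 2 := by
    have h1 : Real.sqrt k ^ 2 = (k:ℝ) := Real.sq_sqrt (le_of_lt hkpos)
    nlinarith [Real.sqrt_nonneg (k:ℝ)]
  have hone : (1:ℝ) ≤ s ^ 2 / k := (one_le_div hkpos).mpr hs2
  have hvmem : ENNReal.ofReal
      ((atomicNorm (sparse n k ∩ Metric.sphere 0 1) (restrictCompl z S)) ^ 2 /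
        ∑ i ∈ S, z i ^ 2) ∈
      {v : ℝ≥0∞ | ∃ z ∈ descentCone R (sparse n k), z ≠ 0 ∧
        ∃ T : Finset (Fin n), T.card = k ∧ (∀ i ∈ T, ∀ j ∉ T, |z j| ≤ |z i|) ∧
          v = ENNReal.ofReal
            ((atomicNorm (sparse n k ∩ Metric.sphere 0 1) (restrictCompl z T)) ^ 2 /
              ∑ i ∈ T, (z i) ^ 2)} :=
    ⟨z, hzdc, hz0, S, hScard, hdomS, rfl⟩
  have hle := le_sSup hvmem
  refine le_trans ?_ hle
  rw [hrc2, hsumS]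
  have : atomicNorm (sparse n k ∩ Metric.sphere 0 1) w = s := rfl
  rw [this]
  calc (1:ℝ≥0∞) = ENNReal.ofReal 1 := ENNReal.ofReal_one.symm
  _ ≤ ENNReal.ofReal (s ^ 2 / k) := ENNReal.ofReal_le_ofReal hone

theorem stmt13 (n k : ℕ) (hk : 2 ≤ 2 * k) (hn : 2 * k ≤ n)
    (A : Set (EuclideanSpace ℝ (Fin n))) (hA : A ⊆ sparse n k)
    (hnorm : sSup ((fun a : EuclideanSpace ℝ (Fin n) => ‖a‖) '' A) = 1) :
    DSigma n k (fun x : EuclideanSpace ℝ (Fin n) => ∑ i, |x i|) ≤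
      DSigma n k (atomicNorm A) := by
  have hk1 : 0 < k := by omega
  have hn1 : 0 < n := by omega
  exact le_trans (DSigma_l1_le_one hk1 hn1) (one_le_DSigma hk1 hn (atomicNorm A))
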